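/- arXiv:1107.1607 — 5 statements merged into one kernel-verified Lean document; each statement's English description precedes it below -/
import Mathlib

section
/- Let D be a nonempty subset of ℝⁿ and let u ∈ ℂⁿ be such that x ↦ e^{⟨u,x⟩} is bounded on D, i.e. sup_{x∈D} Re⟨u,x⟩ < ∞. Suppose that for every x ∈ D there is a Borel measure μ_x on ℝⁿ with total mass at most 1 that is concentrated on D, and that there exist a constant Φ ∈ ℂ and a vector ψ ∈ ℂⁿ such that ∫ e^{⟨u,ξ⟩} μ_x(dξ) = Φ · e^{⟨ψ,x⟩} for every x ∈ D. If Φ ≠ 0, then sup_{x∈D} Re⟨ψ,x⟩ < ∞, i.e. x ↦ e^{⟨ψ,x⟩} is bounded on D. -/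
open MeasureTheory Complex

/-- The bilinear (no conjugation) pairing `⟨u,x⟩ = ∑ i, u i * x i` between `ℂⁿ` and `ℝⁿ`. -/
noncomputable def biPair {n : ℕ} (u : Fin n → ℂ) (x : Fin n → ℝ) : ℂ :=
  ∑ i, u i * (x i : ℂ)

/- On `D` the integrand has modulus `e^{Re⟨u,ξ⟩} ≤ e^C`, and `μ_x` has mass at most 1
and lives on `D`, so `‖Φ‖ e^{Re⟨ψ,x⟩} = ‖∫ e^{⟨u,ξ⟩} μ_x(dξ)‖ ≤ e^C`. Since `Φ ≠ 0`, taking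
logarithms gives `Re⟨ψ,x⟩ ≤ C - log ‖Φ‖`. -/

theorem norm_integral_le_of_norm_le_on_of_measure_compl_eq_zero {α E : Type*}
    [MeasurableSpace α] [NormedAddCommGroup E] [NormedSpace ℝ E] {μ : Measure α} {D : Set α}
    {f : α → E} {M : ℝ} (hM : 0 ≤ M) (hμ : μ Set.univ ≤ 1) (hμD : μ Dᶜ = 0)
    (hf : ∀ x ∈ D, ‖f x‖ ≤ M) : ‖∫ x, f x ∂μ‖ ≤ M := by
  have : IsFiniteMeasure μ := ⟨hμ.trans_lt ENNReal.one_lt_top⟩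
  have hf_ae : ∀ᵐ x ∂μ, ‖f x‖ ≤ M := by
    filter_upwards [mem_ae_iff.mpr hμD] with x hx using hf x hx
  have hmass : μ.real Set.univ ≤ 1 := ENNReal.toReal_le_of_le_ofReal zero_le_one (by simpa)
  calc ‖∫ x, f x ∂μ‖ ≤ M * μ.real Set.univ := norm_integral_le_of_norm_le_const hf_ae
    _ ≤ M := mul_le_of_le_one_right hM hmass

theorem le_sub_log_of_mul_exp_le {a t C : ℝ} (ha : 0 < a) (h : a * Real.exp t ≤ Real.exp C) :
    t ≤ C - Real.log a := by
  have hlog := Real.log_le_log (by positivity) h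
  rw [Real.log_mul ha.ne' (Real.exp_pos t).ne', Real.log_exp, Real.log_exp] at hlog
  linarith

theorem psi_mem_U_of_Phi_ne_zero_general {n : ℕ} (D : Set (Fin n → ℝ))
    (u : Fin n → ℂ) (hu : ∃ C : ℝ, ∀ x ∈ D, (biPair u x).re ≤ C)
    (μ : (Fin n → ℝ) → Measure (Fin n → ℝ))
    (hμ1 : ∀ x ∈ D, μ x Set.univ ≤ 1)
    (hμD : ∀ x ∈ D, μ x Dᶜ = 0)
    (Φ : ℂ) (ψ : Fin n → ℂ)
    (haff : ∀ x ∈ D, ∫ ξ, Complex.exp (biPair u ξ) ∂(μ x) = Φ * Complex.exp (biPair ψ x))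
    (hΦ : Φ ≠ 0) :
    ∃ C : ℝ, ∀ x ∈ D, (biPair ψ x).re ≤ C := by
  obtain ⟨C, hC⟩ := hu
  refine ⟨C - Real.log ‖Φ‖, fun x hx => le_sub_log_of_mul_exp_le (norm_pos_iff.mpr hΦ) ?_⟩
  have hint := norm_integral_le_of_norm_le_on_of_measure_compl_eq_zero (Real.exp_nonneg C)
    (hμ1 x hx) (hμD x hx) fun ξ hξ => by
      rw [norm_exp]
      exact Real.exp_le_exp.mpr (hC ξ hξ)
  rwa [haff x hx, norm_mul, norm_exp] at hint

/-- If `x ↦ e^{⟨u,x⟩}` is bounded on a nonempty set `D`, each `μ x` is a sub-probability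
measure concentrated on `D`, and `∫ e^{⟨u,ξ⟩} μ_x(dξ) = Φ e^{⟨ψ,x⟩}` on `D` with `Φ ≠ 0`,
then `x ↦ e^{⟨ψ,x⟩}` is bounded on `D`. -/
theorem psi_mem_U_of_Phi_ne_zero {n : ℕ} (D : Set (Fin n → ℝ)) (hD : D.Nonempty)
    (u : Fin n → ℂ) (hu : ∃ C : ℝ, ∀ x ∈ D, (biPair u x).re ≤ C)
    (μ : (Fin n → ℝ) → Measure (Fin n → ℝ))
    (hμ1 : ∀ x ∈ D, μ x Set.univ ≤ 1)
    (hμD : ∀ x ∈ D, μ x Dᶜ = 0)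
    (Φ : ℂ) (ψ : Fin n → ℂ)
    (haff : ∀ x ∈ D, ∫ ξ, Complex.exp (biPair u ξ) ∂(μ x) = Φ * Complex.exp (biPair ψ x))
    (hΦ : Φ ≠ 0) :
    ∃ C : ℝ, ∀ x ∈ D, (biPair ψ x).re ≤ C :=
  psi_mem_U_of_Phi_ne_zero_general D u hu μ hμ1 hμD Φ ψ haff hΦ
end

section
/- Let D ⊆ ℝⁿ be nonempty and U := {u ∈ ℂⁿ : sup_{x∈D} Re⟨u,x⟩ < ∞}. Let (p_t)_{t≥0} be a family of Borel kernels on ℝⁿ such that for every t ≥ 0 and x ∈ D the measure p_t(x,·) has total mass at most 1 and is concentrated on D, and the Chapman–Kolmogorov equation holds: p_{t+s}(x,Γ) = ∫ p_t(ξ,Γ) p_s(x,dξ) for all s,t ≥ 0, x ∈ D and Borel sets Γ ⊆ ℝⁿ. Let Φ : ℝ≥0 × ℂⁿ → ℂ and ψ : ℝ≥0 × ℂⁿ → ℂⁿ satisfy the affine identity ∫ e^{⟨u,ξ⟩} p_t(x,dξ) = Φ(t,u) e^{⟨ψ(t,u),x⟩} for all t ≥ 0, x ∈ D and u ∈ U.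 Fix u ∈ U and s,t ≥ 0 and suppose Φ(t+s,u) ≠ 0. Then Φ(t,u) ≠ 0, ψ(t,u) ∈ U, Φ(s,ψ(t,u)) ≠ 0, and for every x ∈ D one has the semiflow identity Φ(t+s,u)·e^{⟨ψ(t+s,u),x⟩} = Φ(t,u)·Φ(s,ψ(t,u))·e^{⟨ψ(s,ψ(t,u)),x⟩}. -/
open MeasureTheory Complex
open scoped NNReal

/-- The set `U` of admissible exponents: those `u ∈ ℂⁿ` for which `x ↦ e^{⟨u,x⟩}` is
bounded on `D`, i.e. `sup_{x ∈ D} Re⟨u,x⟩ < ∞`. -/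
def Uset {n : ℕ} (D : Set (Fin n → ℝ)) : Set (Fin n → ℂ) :=
  {u | ∃ C : ℝ, ∀ x ∈ D, (biPair u x).re ≤ C}

/-!
Chapman–Kolmogorov says that `p (t + s) x` is the mixture of the measures `p t ξ` over
`p s x`, so integrating `e^{⟨u,·⟩}` gives
`Φ(t+s,u) e^{⟨ψ(t+s,u),x⟩} = ∫ Φ(t,u) e^{⟨ψ(t,u),ξ⟩} p_s(x,dξ)`.
The left side is nonzero, hence so is `Φ(t,u)`; the integrands `Φ(t,u) e^{⟨ψ(t,u),ξ⟩}`, being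
integrals of `e^{⟨u,·⟩}` against sub-probability measures on `D`, are bounded by
`sup_D e^{Re⟨u,·⟩}`, which puts `ψ(t,u)` into `U`; the affine identity at time `s` then
evaluates the right side.

Since `ξ ↦ p t ξ Γ` is not assumed measurable, the outer integral in the Chapman–Kolmogorov
equation is only a lower integral; extending the equation from sets to bounded measurable
integrands is the technical core.
-/

open scoped ENNReal

def IsMixture {X : Type*} [MeasurableSpace X] (μ ν : Measure X) (κ : X → Measure X) : Prop :=
  ∀ Γ, MeasurableSet Γ → μ Γ = ∫⁻ ξ, κ ξ Γ ∂ν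

namespace IsMixture

variable {X : Type*} [MeasurableSpace X] {μ ν : Measure X} {κ : X → Measure X}

theorem lintegral_le (hμ : IsMixture μ ν κ) {h : X → ℝ≥0∞} (hh : Measurable h) :
    ∫⁻ ζ, h ζ ∂μ ≤ ∫⁻ ξ, ∫⁻ ζ, h ζ ∂κ ξ ∂ν := by
  refine Measurable.ennreal_induction (motive := fun h =>
    ∫⁻ ζ, h ζ ∂μ ≤ ∫⁻ ξ, ∫⁻ ζ, h ζ ∂κ ξ ∂ν) ?_ ?_ ?_ hh
  · intro c s hs
    simp only [lintegral_indicator_const hs, hμ s hs]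
    exact lintegral_const_mul_le c _
  · intro f g _ hf _ hfμ hgμ
    simp only [Pi.add_apply, lintegral_add_left hf]
    exact (add_le_add hfμ hgμ).trans (le_lintegral_add _ _)
  · intro f hf hmono hfμ
    rw [lintegral_iSup hf hmono]
    exact iSup_le fun n => (hfμ n).trans <| lintegral_mono fun ξ =>
      lintegral_mono fun ζ => le_iSup (fun n => f n ζ) n

/-- The lower integral over `ν` is only superadditive, so `lintegral_le` alone cannot be
reversed; applying it to both `h` and `M - h`, whose sum is constant, forces equality. -/
theorem lintegral_eq [IsFiniteMeasure μ] (hμ : IsMixture μ ν κ) {h : X → ℝ≥0∞}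
    (hh : Measurable h) {M : ℝ≥0∞} (hM : M ≠ ∞) (hhM : ∀ ζ, h ζ ≤ M) :
    ∫⁻ ζ, h ζ ∂μ = ∫⁻ ξ, ∫⁻ ζ, h ζ ∂κ ξ ∂ν := by
  have hsum : ∀ m : Measure X, ∫⁻ ζ, h ζ + (M - h ζ) ∂m = M * m Set.univ := fun m => by
    simp only [add_tsub_cancel_of_le (hhM _), lintegral_const]
  have hle := hμ.lintegral_le (h := fun ζ => M - h ζ) (measurable_const.sub hh)
  have htotal : ∫⁻ ζ, h ζ ∂μ + ∫⁻ ζ, M - h ζ ∂μ ≠ ∞ := by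
    rw [← lintegral_add_left hh, hsum]
    exact ENNReal.mul_ne_top hM (measure_ne_top μ _)
  have hsuper : (∫⁻ ξ, ∫⁻ ζ, h ζ ∂κ ξ ∂ν) + ∫⁻ ξ, ∫⁻ ζ, M - h ζ ∂κ ξ ∂ν ≤
      ∫⁻ ζ, h ζ ∂μ + ∫⁻ ζ, M - h ζ ∂μ := calc
    _ ≤ ∫⁻ ξ, (∫⁻ ζ, h ζ ∂κ ξ) + ∫⁻ ζ, M - h ζ ∂κ ξ ∂ν := le_lintegral_add _ _
    _ = M * μ Set.univ := by
      simp only [← lintegral_add_left hh, hsum, lintegral_const_mul' _ _ hM,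
        hμ _ MeasurableSet.univ]
    _ = ∫⁻ ζ, h ζ ∂μ + ∫⁻ ζ, M - h ζ ∂μ := by rw [← lintegral_add_left hh, hsum]
  refine le_antisymm (hμ.lintegral_le hh)
    (ENNReal.le_of_add_le_add_right (a := ∫⁻ ζ, M - h ζ ∂μ) ?_ ?_)
  · exact ne_top_of_le_ne_top htotal le_add_self
  · exact (add_le_add le_rfl hle).trans hsuper

theorem integrable [IsFiniteMeasure μ] (hμ : IsMixture μ ν κ) {E : Type*} [NormedAddCommGroup E]
    [NormedSpace ℝ E] {f : X → E} (hf : StronglyMeasurable f) {M : ℝ} (hfM : ∀ ζ, ‖f ζ‖ ≤ M)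
    {g : X → E} (hg : AEStronglyMeasurable g ν) (hfg : ∀ᵐ ξ ∂ν, ∫ ζ, f ζ ∂κ ξ = g ξ) :
    Integrable g ν := by
  refine ⟨hg, ?_⟩
  calc ∫⁻ ξ, ‖g ξ‖ₑ ∂ν ≤ ∫⁻ ξ, ∫⁻ ζ, ‖f ζ‖ₑ ∂κ ξ ∂ν :=
        lintegral_mono_ae (hfg.mono fun ξ h => h ▸ enorm_integral_le_lintegral_enorm f)
    _ = ∫⁻ ζ, ‖f ζ‖ₑ ∂μ := by
        refine (hμ.lintegral_eq hf.enorm (M := ENNReal.ofReal M) ENNReal.ofReal_ne_top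
          fun ζ => ?_).symm
        rw [← ofReal_norm]
        exact ENNReal.ofReal_le_ofReal (hfM ζ)
    _ < ∞ := (Integrable.of_bound hf.aestronglyMeasurable M (ae_of_all _ hfM)).2

theorem integral_real_eq [IsFiniteMeasure μ] (hμ : IsMixture μ ν κ)
    (hκ : ∀ᵐ ξ ∂ν, IsFiniteMeasure (κ ξ)) {f : X → ℝ} (hf : Measurable f) {M : ℝ}
    (hfM : ∀ ζ, ‖f ζ‖ ≤ M) {g : X → ℝ} (hg : Integrable g ν)
    (hfg : ∀ᵐ ξ ∂ν, ∫ ζ, f ζ ∂κ ξ = g ξ) :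
    ∫ ζ, f ζ ∂μ = ∫ ξ, g ξ ∂ν := by
  have hf_int : ∀ (m : Measure X) [IsFiniteMeasure m], Integrable f m := fun m _ =>
    Integrable.of_bound hf.aestronglyMeasurable M (ae_of_all _ hfM)
  have hlintegral : ∀ h : X → ℝ, Measurable h → (∀ ζ, |h ζ| ≤ M) →
      ∫⁻ ζ, ENNReal.ofReal (h ζ) ∂μ = ∫⁻ ξ, ∫⁻ ζ, ENNReal.ofReal (h ζ) ∂κ ξ ∂ν :=
    fun _ hh hhM => hμ.lintegral_eq hh.ennreal_ofReal ENNReal.ofReal_ne_top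
      fun ζ => ENNReal.ofReal_le_ofReal ((le_abs_self _).trans (hhM ζ))
  have hfinite : ∀ {m : Measure X} {h : X → ℝ}, Integrable h m →
      (∫⁻ ζ, ENNReal.ofReal (h ζ) ∂m) ≠ ∞ ∧ ∫⁻ ζ, ENNReal.ofReal (-h ζ) ∂m ≠ ∞ :=
    fun hh => ⟨hh.lintegral_lt_top.ne, hh.neg.lintegral_lt_top.ne⟩
  -- `g = ∫ f⁺ - ∫ f⁻` rearranged without subtraction, so that it can be integrated over `ν`
  -- although neither `ξ ↦ ∫ f⁺ ∂κ ξ` nor `ξ ↦ ∫ f⁻ ∂κ ξ` need be measurable.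
  have hbalance : ∀ᵐ ξ ∂ν, (∫⁻ ζ, ENNReal.ofReal (f ζ) ∂κ ξ) + ENNReal.ofReal (-g ξ) =
      (∫⁻ ζ, ENNReal.ofReal (-f ζ) ∂κ ξ) + ENNReal.ofReal (g ξ) := by
    filter_upwards [hκ, hfg] with ξ _ hfgξ
    obtain ⟨hpos, hneg⟩ := hfinite (hf_int (κ ξ))
    rw [← hfgξ, integral_eq_lintegral_pos_part_sub_lintegral_neg_part (hf_int _), neg_sub,
      ENNReal.ofReal_sub _ ENNReal.toReal_nonneg, ENNReal.ofReal_sub _ ENNReal.toReal_nonneg,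
      ENNReal.ofReal_toReal hpos, ENNReal.ofReal_toReal hneg, add_tsub_eq_max, add_tsub_eq_max,
      max_comm]
  have hsum := lintegral_congr_ae hbalance
  rw [lintegral_add_right' _ (g := fun ξ => ENNReal.ofReal (-g ξ))
      hg.1.aemeasurable.neg.ennreal_ofReal,
    lintegral_add_right' _ hg.1.aemeasurable.ennreal_ofReal,
    ← hlintegral f hf fun ζ => hfM ζ,
    ← hlintegral (fun ζ => -f ζ) hf.neg fun ζ => (abs_neg (f ζ)).trans_le (hfM ζ)] at hsum
  have := congrArg ENNReal.toReal hsum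
  rw [ENNReal.toReal_add (hfinite (hf_int μ)).1 (hfinite hg).2,
    ENNReal.toReal_add (hfinite (hf_int μ)).2 (hfinite hg).1] at this
  rw [integral_eq_lintegral_pos_part_sub_lintegral_neg_part (hf_int μ),
    integral_eq_lintegral_pos_part_sub_lintegral_neg_part hg]
  linarith

theorem integral_eq [IsFiniteMeasure μ] (hμ : IsMixture μ ν κ)
    (hκ : ∀ᵐ ξ ∂ν, IsFiniteMeasure (κ ξ)) {E : Type*} [NormedAddCommGroup E] [NormedSpace ℝ E]
    [CompleteSpace E] {f : X → E} (hf : StronglyMeasurable f) {M : ℝ} (hfM : ∀ ζ, ‖f ζ‖ ≤ M)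
    {g : X → E} (hg : AEStronglyMeasurable g ν) (hfg : ∀ᵐ ξ ∂ν, ∫ ζ, f ζ ∂κ ξ = g ξ) :
    ∫ ζ, f ζ ∂μ = ∫ ξ, g ξ ∂ν := by
  have hf_int : ∀ (m : Measure X) [IsFiniteMeasure m], Integrable f m := fun m _ =>
    Integrable.of_bound hf.aestronglyMeasurable M (ae_of_all _ hfM)
  have hg_int := hμ.integrable hf hfM hg hfg
  refine (SeparatingDual.eq_iff_forall_dual_eq (R := ℝ)).2 fun L => ?_
  rw [← L.integral_comp_comm (hf_int μ), ← L.integral_comp_comm hg_int]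
  refine hμ.integral_real_eq hκ (L.continuous.comp_stronglyMeasurable hf).measurable
    (fun ζ => (L.le_opNorm _).trans (mul_le_mul_of_nonneg_left (hfM ζ) (norm_nonneg L)))
    (L.integrable_comp hg_int) ?_
  filter_upwards [hκ, hfg] with ξ _ hfgξ
  rw [L.integral_comp_comm (hf_int _), hfgξ]

end IsMixture

theorem measurable_biPair {n : ℕ} (u : Fin n → ℂ) : Measurable (biPair u) :=
  Finset.measurable_sum _ fun i _ =>
    measurable_const.mul (Complex.measurable_ofReal.comp (measurable_pi_apply i))

theorem mem_Uset_of_norm_mul_exp_le {n : ℕ} {D : Set (Fin n → ℝ)} {c : ℂ} (hc : c ≠ 0)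
    {v : Fin n → ℂ} {K : ℝ} (hK : ∀ x ∈ D, ‖c * exp (biPair v x)‖ ≤ K) : v ∈ Uset D := by
  refine ⟨Real.log (K / ‖c‖), fun x hx => ?_⟩
  have hexp : Real.exp (biPair v x).re ≤ K / ‖c‖ := by
    rw [le_div_iff₀ (norm_pos_iff.2 hc), mul_comm, ← Complex.norm_exp, ← norm_mul]
    exact hK x hx
  simpa using Real.log_le_log (Real.exp_pos _) hexp

theorem exists_bounded_measurable_eqOn_exp_biPair {n : ℕ} {D : Set (Fin n → ℝ)}
    {u : Fin n → ℂ} (hu : u ∈ Uset D) :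
    ∃ e : (Fin n → ℝ) → ℂ, Measurable e ∧ (∃ K, 0 ≤ K ∧ ∀ ζ, ‖e ζ‖ ≤ K) ∧
      Set.EqOn e (fun ζ => exp (biPair u ζ)) D := by
  obtain ⟨C, hC⟩ := hu
  -- `D` need not be measurable, so cut `exp ⟨u,·⟩` off on a measurable superset of `D`.
  set S := {ζ | (biPair u ζ).re ≤ C}
  have hS : MeasurableSet S :=
    measurableSet_le (measurable_re.comp (measurable_biPair u)) measurable_const
  refine ⟨S.indicator fun ζ => exp (biPair u ζ),
    (measurable_exp.comp (measurable_biPair u)).indicator hS,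
    ⟨Real.exp C, (Real.exp_pos C).le, fun ζ => ?_⟩,
    fun ζ hζ => Set.indicator_of_mem (s := S) (hC ζ hζ) _⟩
  by_cases hζ : (biPair u ζ).re ≤ C
  · simp [S, hζ, norm_exp]
  · simp [S, hζ, (Real.exp_pos C).le]

theorem norm_integral_le_of_measure_univ_le_one {X E : Type*} [MeasurableSpace X]
    [NormedAddCommGroup E] [NormedSpace ℝ E] {m : Measure X} (hm : m Set.univ ≤ 1) {f : X → E}
    {K : ℝ} (hK : 0 ≤ K) (hfK : ∀ x, ‖f x‖ ≤ K) : ‖∫ x, f x ∂m‖ ≤ K := by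
  have : IsFiniteMeasure m := ⟨hm.trans_lt ENNReal.one_lt_top⟩
  refine (norm_integral_le_of_norm_le_const (ae_of_all _ hfK)).trans ?_
  exact mul_le_of_le_one_right hK (ENNReal.toReal_le_of_le_ofReal zero_le_one (by simpa using hm))

/-- The semiflow property of the functions `Φ` and `ψ` of an affine family of sub-Markov
kernels: if `Φ(t+s,u) ≠ 0` then `Φ(t,u) ≠ 0`, `ψ(t,u) ∈ U`, `Φ(s,ψ(t,u)) ≠ 0`, and
`Φ(t+s,u) e^{⟨ψ(t+s,u),x⟩} = Φ(t,u) Φ(s,ψ(t,u)) e^{⟨ψ(s,ψ(t,u)),x⟩}` for `x ∈ D`. -/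
theorem semiflow_of_affine {n : ℕ} (D : Set (Fin n → ℝ)) (hD : D.Nonempty)
    (p : ℝ≥0 → (Fin n → ℝ) → Measure (Fin n → ℝ))
    (hp1 : ∀ (t : ℝ≥0), ∀ x ∈ D, p t x Set.univ ≤ 1)
    (hpD : ∀ (t : ℝ≥0), ∀ x ∈ D, p t x Dᶜ = 0)
    (hCK : ∀ (s t : ℝ≥0), ∀ x ∈ D, ∀ Γ : Set (Fin n → ℝ), MeasurableSet Γ →
      p (t + s) x Γ = ∫⁻ ξ, p t ξ Γ ∂(p s x))
    (Φ : ℝ≥0 → (Fin n → ℂ) → ℂ) (ψ : ℝ≥0 → (Fin n → ℂ) → (Fin n → ℂ))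
    (haff : ∀ (t : ℝ≥0), ∀ x ∈ D, ∀ u ∈ Uset D,
      ∫ ξ, Complex.exp (biPair u ξ) ∂(p t x) = Φ t u * Complex.exp (biPair (ψ t u) x))
    (u : Fin n → ℂ) (hu : u ∈ Uset D) (s t : ℝ≥0)
    (hΦ : Φ (t + s) u ≠ 0) :
    Φ t u ≠ 0 ∧ ψ t u ∈ Uset D ∧ Φ s (ψ t u) ≠ 0 ∧
      ∀ x ∈ D, Φ (t + s) u * Complex.exp (biPair (ψ (t + s) u) x) =
        Φ t u * Φ s (ψ t u) * Complex.exp (biPair (ψ s (ψ t u)) x) := by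
  obtain ⟨x₀, hx₀⟩ := hD
  obtain ⟨e, he_meas, ⟨K, hK, he_le⟩, he_eq⟩ := exists_bounded_measurable_eqOn_exp_biPair hu
  have hfin : ∀ r, ∀ x ∈ D, IsFiniteMeasure (p r x) := fun r x hx =>
    ⟨(hp1 r x hx).trans_lt ENNReal.one_lt_top⟩
  have hconc : ∀ r, ∀ x ∈ D, ∀ᵐ ξ ∂p r x, ξ ∈ D := fun r x hx => ae_iff.2 (hpD r x hx)
  have he_int : ∀ r, ∀ x ∈ D, ∫ ζ, e ζ ∂p r x = Φ r u * exp (biPair (ψ r u) x) :=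
    fun r x hx => (integral_congr_ae ((hconc r x hx).mono he_eq)).trans (haff r x hx u hu)
  have hmix : ∀ x ∈ D, Φ (t + s) u * exp (biPair (ψ (t + s) u) x) =
      ∫ ξ, Φ t u * exp (biPair (ψ t u) ξ) ∂p s x := fun x hx => by
    have := hfin (t + s) x hx
    rw [← he_int _ x hx]
    exact IsMixture.integral_eq (hCK s t x hx) ((hconc s x hx).mono fun ξ hξ => hfin t ξ hξ)
      he_meas.stronglyMeasurable he_le
      (measurable_const.mul (measurable_exp.comp (measurable_biPair _))).aestronglyMeasurable
      ((hconc s x hx).mono fun ξ hξ => he_int t ξ hξ)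
  have hΦt : Φ t u ≠ 0 := fun h0 => by simpa [h0, hΦ] using hmix x₀ hx₀
  have hψ : ψ t u ∈ Uset D := mem_Uset_of_norm_mul_exp_le hΦt fun ξ hξ => by
    rw [← he_int t ξ hξ]
    exact norm_integral_le_of_measure_univ_le_one (hp1 t ξ hξ) hK he_le
  have hsemi : ∀ x ∈ D, Φ (t + s) u * exp (biPair (ψ (t + s) u) x) =
      Φ t u * Φ s (ψ t u) * exp (biPair (ψ s (ψ t u)) x) := fun x hx => by
    rw [hmix x hx, integral_const_mul, haff s x hx _ hψ, mul_assoc]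
  exact ⟨hΦt, hψ, fun h0 => by simpa [h0, hΦ] using hsemi x₀ hx₀, hsemi⟩
end

section
/- Let D ⊆ ℝⁿ and define Re U := {v ∈ ℝⁿ : sup_{x∈D} ⟨v,x⟩ < ∞}, W := span_ℝ(Re U), and let Π_W denote the orthogonal projection of ℝⁿ onto W. Assume that the relative (intrinsic) interior of Re U is nonempty, let u be a point of the relative interior of Re U, and let (x_k)_{k∈ℕ} be a sequence with x_k ∈ D for all k such that ‖Π_W x_k‖ → ∞ as k → ∞. Then ⟨u, x_k⟩ → −∞ as k → ∞. -/
open Filter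
open scoped Topology RealInnerProductSpace

/-!
Since `u` is in the relative interior of `Re U` and `0 ∈ Re U`, the points `u ± δ bᵢ` lie in
`Re U` for an orthonormal basis `(bᵢ)` of `W` and small `δ > 0`. Each pair `u ± δ bᵢ` bounds
`δ |⟪bᵢ, x⟫| + ⟪u, x⟫` from above on `D`; summing over `i` gives
`δ ‖Π_W x‖ + (dim W) ⟪u, x⟫ ≤ C` on `D`, so `⟪u, x_k⟫ → -∞` once `‖Π_W x_k‖ → ∞`.
-/

section IntrinsicInterior

variable {E : Type*} [NormedAddCommGroup E] [NormedSpace ℝ E]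

theorem span_le_vectorSpan_of_zero_mem {s : Set E} (hs : (0 : E) ∈ s) :
    Submodule.span ℝ s ≤ vectorSpan ℝ s := by
  rw [vectorSpan_eq_span_vsub_set_right ℝ hs]
  simp

theorem exists_add_mem_of_mem_intrinsicInterior {s : Set E} {u : E}
    (hu : u ∈ intrinsicInterior ℝ s) :
    ∃ ε > 0, ∀ w ∈ vectorSpan ℝ s, ‖w‖ < ε → u + w ∈ s := by
  have hu_span : u ∈ affineSpan ℝ s := subset_affineSpan ℝ s (intrinsicInterior_subset hu)
  obtain ⟨y, hy, rfl⟩ := hu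
  obtain ⟨ε, hε, hball⟩ := Metric.mem_nhds_iff.1 (mem_interior_iff_mem_nhds.1 hy)
  refine ⟨ε, hε, fun w hw hwε => ?_⟩
  have hw_span : (y : E) + w ∈ affineSpan ℝ s := by
    rw [← direction_affineSpan] at hw
    simpa [add_comm] using AffineSubspace.vadd_mem_of_mem_direction hw hu_span
  refine hball (show (⟨y + w, hw_span⟩ : affineSpan ℝ s) ∈ Metric.ball y ε from ?_)
  simpa [Metric.mem_ball, Subtype.dist_eq, dist_eq_norm] using hwε

end IntrinsicInterior

section InnerBounds

variable {E : Type*} [NormedAddCommGroup E] [InnerProductSpace ℝ E]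

theorem exists_abs_inner_add_inner_le {D : Set E} {u v : E}
    (hadd : ∃ C, ∀ x ∈ D, ⟪u + v, x⟫ ≤ C) (hsub : ∃ C, ∀ x ∈ D, ⟪u - v, x⟫ ≤ C) :
    ∃ C, ∀ x ∈ D, |⟪v, x⟫| + ⟪u, x⟫ ≤ C := by
  obtain ⟨C₁, h₁⟩ := hadd
  obtain ⟨C₂, h₂⟩ := hsub
  refine ⟨max C₁ C₂, fun x hx => ?_⟩
  have hx₁ := h₁ x hx
  have hx₂ := h₂ x hx
  rw [inner_add_left] at hx₁
  rw [inner_sub_left] at hx₂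
  rcases abs_choice ⟪v, x⟫ with h | h <;> rw [h] <;>
    linarith [le_max_left C₁ C₂, le_max_right C₁ C₂]

theorem exists_sum_abs_inner_add_card_mul_inner_le {ι : Type*} [Fintype ι] {D : Set E} {u : E}
    {v : ι → E} (hadd : ∀ i, ∃ C, ∀ x ∈ D, ⟪u + v i, x⟫ ≤ C)
    (hsub : ∀ i, ∃ C, ∀ x ∈ D, ⟪u - v i, x⟫ ≤ C) :
    ∃ C, ∀ x ∈ D, ∑ i, |⟪v i, x⟫| + Fintype.card ι * ⟪u, x⟫ ≤ C := by
  choose C hC using fun i => exists_abs_inner_add_inner_le (hadd i) (hsub i)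
  refine ⟨∑ i, C i, fun x hx => ?_⟩
  calc ∑ i, |⟪v i, x⟫| + Fintype.card ι * ⟪u, x⟫ = ∑ i, (|⟪v i, x⟫| + ⟪u, x⟫) := by
        simp [Finset.sum_add_distrib]
    _ ≤ ∑ i, C i := Finset.sum_le_sum fun i _ => hC i x hx

theorem OrthonormalBasis.norm_orthogonalProjectionOnto_le_sum_abs_inner {ι : Type*} [Fintype ι]
    {K : Submodule ℝ E} [K.HasOrthogonalProjection] (b : OrthonormalBasis ι ℝ K) (x : E) :
    ‖K.orthogonalProjectionOnto x‖ ≤ ∑ i, |⟪(b i : E), x⟫| := by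
  rw [b.orthogonalProjectionOnto_apply_eq_sum]
  refine (norm_sum_le _ _).trans (Finset.sum_le_sum fun i _ => ?_)
  rw [norm_smul, b.orthonormal.1 i, mul_one, Real.norm_eq_abs]

theorem exists_mul_norm_orthogonalProjectionOnto_add_finrank_mul_inner_le {D : Set E} {u : E}
    {K : Submodule ℝ E} [FiniteDimensional ℝ K] {δ : ℝ} (hδ : 0 < δ)
    (hball : ∀ w ∈ K, ‖w‖ ≤ δ → ∃ C, ∀ x ∈ D, ⟪u + w, x⟫ ≤ C) :
    ∃ C, ∀ x ∈ D, δ * ‖(K.orthogonalProjectionOnto x : E)‖ + Module.finrank ℝ K * ⟪u, x⟫ ≤ C := by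
  let b := stdOrthonormalBasis ℝ K
  have hb : ∀ i (t : ℝ), |t| = δ → ∃ C, ∀ x ∈ D, ⟪u + t • (b i : E), x⟫ ≤ C := fun i t ht =>
    hball _ (K.smul_mem t (b i).2) <| by
      rw [norm_smul, show ‖(b i : E)‖ = 1 from b.orthonormal.1 i, mul_one, Real.norm_eq_abs, ht]
  obtain ⟨C, hC⟩ := exists_sum_abs_inner_add_card_mul_inner_le (v := fun i => δ • (b i : E))
    (fun i => hb i δ (abs_of_pos hδ))
    (fun i => by simpa [sub_eq_add_neg, ← neg_smul] using hb i (-δ) (by simp [abs_of_pos hδ]))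
  refine ⟨C, fun x hx => le_trans ?_ (by simpa using hC x hx)⟩
  simp only [real_inner_smul_left, abs_mul, abs_of_pos hδ, ← Finset.mul_sum]
  gcongr
  exact b.norm_orthogonalProjectionOnto_le_sum_abs_inner x

end InnerBounds

theorem tendsto_atBot_of_mul_add_mul_le {α : Type*} {l : Filter α} [l.NeBot] {f g : α → ℝ}
    {a c C : ℝ} (ha : 0 < a) (hc : 0 ≤ c) (hg : Tendsto g l atTop)
    (h : ∀ k, a * g k + c * f k ≤ C) : Tendsto f l atBot := by
  have hcf : Tendsto (fun k => c * f k) l atBot :=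
    tendsto_atBot_mono (fun k => show c * f k ≤ C + -(a * g k) by linarith [h k])
      (tendsto_atBot_add_const_left l C (tendsto_neg_atTop_atBot.comp (hg.const_mul_atTop ha)))
  have hc_pos : 0 < c := by
    refine hc.lt_of_ne fun hc0 => not_tendsto_const_atBot (0 : ℝ) l ?_
    simpa [← hc0] using hcf
  exact (tendsto_const_mul_atBot_of_pos hc_pos).1 hcf

/-- The Lemma on explosion directions: if `Re U = {v : sup_{x∈D}⟨v,x⟩ < ∞}` has nonempty
relative (intrinsic) interior, `u` lies in this relative interior, and `(x_k)` is a sequence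
in `D` whose orthogonal projection onto `W = span(Re U)` has norm tending to `∞`, then
`⟨u, x_k⟩ → −∞`. -/
theorem inner_tendsto_atBot_of_proj_norm_tendsto_atTop {n : ℕ}
    (D : Set (EuclideanSpace ℝ (Fin n)))
    (ReU : Set (EuclideanSpace ℝ (Fin n)))
    (hReU : ReU = {v : EuclideanSpace ℝ (Fin n) | ∃ C : ℝ, ∀ x ∈ D, ⟪v, x⟫ ≤ C})
    (W : Submodule ℝ (EuclideanSpace ℝ (Fin n)))
    (hW : W = Submodule.span ℝ ReU)
    (u : EuclideanSpace ℝ (Fin n)) (hu : u ∈ intrinsicInterior ℝ ReU)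
    (x : ℕ → EuclideanSpace ℝ (Fin n)) (hxD : ∀ k, x k ∈ D)
    (hproj : Tendsto (fun k => ‖(Submodule.orthogonalProjectionOnto W (x k) : EuclideanSpace ℝ (Fin n))‖)
      atTop atTop) :
    Tendsto (fun k => ⟪u, x k⟫) atTop atBot := by
  subst hW
  have h0 : (0 : EuclideanSpace ℝ (Fin n)) ∈ ReU := hReU ▸ ⟨0, fun y _ => by simp⟩
  obtain ⟨ε, hε, hball⟩ := exists_add_mem_of_mem_intrinsicInterior hu
  have hWball : ∀ w ∈ Submodule.span ℝ ReU, ‖w‖ ≤ ε / 2 → ∃ C, ∀ y ∈ D, ⟪u + w, y⟫ ≤ C := by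
    intro w hw hwε
    simpa [hReU] using
      hball w (span_le_vectorSpan_of_zero_mem h0 hw) (hwε.trans_lt (half_lt_self hε))
  obtain ⟨C, hC⟩ := exists_mul_norm_orthogonalProjectionOnto_add_finrank_mul_inner_le
    (half_pos hε) hWball
  exact tendsto_atBot_of_mul_add_mul_le (half_pos hε) (Nat.cast_nonneg _) hproj
    fun k => hC _ (hxD k)
end

section
/- Let W be a linear subspace of ℝⁿ and let (x_k)_{k∈ℕ} be a sequence in ℝⁿ such that the orthogonal projections Π_W x_k converge in ℝⁿ as k → ∞ while limsup_{k→∞} ‖Π_{W^⊥} x_k‖ = ∞. Then there exist a subsequence (x_{k_j})_{j∈ℕ}, an integer r ≥ 1, and mutually orthogonal unit vectors g_1,…,g_r in the orthogonal complement W^⊥ such that: (a) the sequence x_{k_j} − ∑_{i=1}^{r} ⟨x_{k_j}, g_i⟩ g_i converges in ℝⁿ as j → ∞; (b) for every i, ⟨x_{k_j}, g_i⟩ → +∞ as j → ∞; and (c) the rates of divergence are non-increasing in i, in the sense that for every 1 ≤ i ≤ r−1 there is a constant C with ⟨x_{k_j}, g_{i+1}⟩ ≤ C·⟨x_{k_j},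 g_i⟩ for all sufficiently large j. -/
/-!
Normalising `Π_{W^⊥} x_k` along a subsequence on which it blows up yields, by compactness of
the unit sphere, a limiting unit direction `g₁ ∈ W^⊥` with `‖Π_{W^⊥} x_k‖ ≤ 2 ⟪x_k, g₁⟫`
eventually. Removing the `g₁`-component leaves a sequence in `W^⊥ ∩ g₁^⊥`, a space of smaller
dimension, with the same inner products against its vectors: either it has a convergent
subsequence, or the construction recurses. The bound `⟪x_k, g₂⟫ ≤ ‖Π_{W^⊥} x_k‖ ≤ 2 ⟪x_k, g₁⟫`
orders the rates of divergence.
-/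

open Filter
open scoped Topology RealInnerProductSpace

theorem Orthonormal.fin_cons {𝕜 E : Type*} [RCLike 𝕜] [NormedAddCommGroup E]
    [InnerProductSpace 𝕜 E] {r : ℕ} {g : Fin r → E} (hg : Orthonormal 𝕜 g) {g₀ : E}
    (hg₀ : ‖g₀‖ = 1) (hperp : ∀ i, inner 𝕜 g₀ (g i) = 0) :
    Orthonormal 𝕜 (Fin.cons g₀ g : Fin (r + 1) → E) := by
  refine ⟨Fin.cases hg₀ hg.1, fun i j hij => ?_⟩
  cases i using Fin.cases with
  | zero =>
    cases j using Fin.cases with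
    | zero => exact absurd rfl hij
    | succ j => exact hperp j
  | succ i =>
    cases j using Fin.cases with
    | zero => exact inner_eq_zero_symm.mp (hperp i)
    | succ j => exact hg.2 (Fin.succ_injective _ |>.ne_iff.mp hij)

theorem Submodule.finrank_inf_orthogonal_singleton_lt {𝕜 E : Type*} [RCLike 𝕜]
    [NormedAddCommGroup E] [InnerProductSpace 𝕜 E] [FiniteDimensional 𝕜 E]
    {V : Submodule 𝕜 E} {g : E} (hgV : g ∈ V) (hg : g ≠ 0) :
    Module.finrank 𝕜 ↥(V ⊓ (𝕜 ∙ g)ᗮ) < Module.finrank 𝕜 V := by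
  refine Submodule.finrank_lt_finrank_of_lt (SetLike.lt_iff_le_and_exists.mpr
    ⟨inf_le_left, g, hgV, fun hg' => hg ?_⟩)
  exact inner_self_eq_zero.mp (mem_orthogonal_singleton_iff_inner_right.mp hg'.2)

theorem exists_strictMono_tendsto_atTop_of_limsup_eq_top {u : ℕ → ℝ}
    (h : atTop.limsup (fun k => (u k : EReal)) = ⊤) :
    ∃ φ : ℕ → ℕ, StrictMono φ ∧ Tendsto (u ∘ φ) atTop atTop := by
  have hfreq : ∀ m : ℕ, ∃ᶠ k in atTop, (m : ℝ) ≤ u k := fun m =>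
    (frequently_lt_of_lt_limsup (h := h ▸ EReal.coe_lt_top m)).mono
      fun k hk => (EReal.coe_lt_coe_iff.mp hk).le
  obtain ⟨φ, hφ, hφu⟩ := extraction_forall_of_frequently hfreq
  exact ⟨φ, hφ, tendsto_atTop_mono hφu tendsto_natCast_atTop_atTop⟩

section DivergenceFrame

variable {E : Type*} [NormedAddCommGroup E] [InnerProductSpace ℝ E]

/-- Unlike in the theorem, `r = 0` is allowed: it means that `p` converges. -/
structure IsDivergenceFrame (V : Submodule ℝ E) (p : ℕ → E) {r : ℕ} (g : Fin r → E) : Prop where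
  mem : ∀ i, g i ∈ V
  orthonormal : Orthonormal ℝ g
  tendsto_residual : ∃ L, Tendsto (fun k => p k - ∑ i, ⟪p k, g i⟫ • g i) atTop (𝓝 L)
  tendsto_inner : ∀ i, Tendsto (fun k => ⟪p k, g i⟫) atTop atTop
  inner_succ_le : ∀ i i' : Fin r, (i' : ℕ) = i + 1 →
    ∃ C : ℝ, ∀ᶠ k in atTop, ⟪p k, g i'⟫ ≤ C * ⟪p k, g i⟫

namespace IsDivergenceFrame

variable {V : Submodule ℝ E} {p : ℕ → E} {r : ℕ} {g : Fin r → E}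

theorem of_tendsto {L : E} (hp : Tendsto p atTop (𝓝 L)) :
    IsDivergenceFrame V p (Fin.elim0 : Fin 0 → E) :=
  ⟨fun i => i.elim0, .of_isEmpty _, ⟨L, by simpa using hp⟩, fun i => i.elim0, fun i => i.elim0⟩

theorem pos (hg : IsDivergenceFrame V p g) (hp : Tendsto (fun k => ‖p k‖) atTop atTop) : 0 < r := by
  obtain ⟨L, hL⟩ := hg.tendsto_residual
  refine Nat.pos_of_ne_zero fun hr => not_tendsto_atTop_of_tendsto_nhds hL.norm ?_
  subst hr
  simpa using hp

theorem add {a : ℕ → E} {L : E} (hg : IsDivergenceFrame V p g) (ha : Tendsto a atTop (𝓝 L))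
    (hag : ∀ k i, ⟪a k, g i⟫ = 0) : IsDivergenceFrame V (fun k => a k + p k) g := by
  have hinner : ∀ k i, ⟪a k + p k, g i⟫ = ⟪p k, g i⟫ := fun k i => by
    rw [inner_add_left, hag, zero_add]
  obtain ⟨L', hL'⟩ := hg.tendsto_residual
  refine ⟨hg.mem, hg.orthonormal, ⟨L + L', (ha.add hL').congr fun k => ?_⟩, ?_, ?_⟩
  · simp only [hinner]; abel
  · simpa only [hinner] using hg.tendsto_inner
  · simpa only [hinner] using hg.inner_succ_le

theorem cons {g₀ : E} (hg : IsDivergenceFrame (V ⊓ (ℝ ∙ g₀)ᗮ) (fun k => p k - ⟪p k, g₀⟫ • g₀) g)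
    (hg₀V : g₀ ∈ V) (hg₀ : ‖g₀‖ = 1) {C : ℝ} (hC : 0 < C)
    (hp : Tendsto (fun k => ‖p k‖) atTop atTop) (hdom : ∀ᶠ k in atTop, ‖p k‖ ≤ C * ⟪p k, g₀⟫) :
    IsDivergenceFrame V p (Fin.cons g₀ g : Fin (r + 1) → E) := by
  have hperp : ∀ i, ⟪g₀, g i⟫ = 0 := fun i =>
    Submodule.mem_orthogonal_singleton_iff_inner_right.mp (hg.mem i).2
  have hinner : ∀ k i, ⟪p k - ⟪p k, g₀⟫ • g₀, g i⟫ = ⟪p k, g i⟫ := fun k i => by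
    rw [inner_sub_left, real_inner_smul_left, hperp, mul_zero, sub_zero]
  have hinner₀ : Tendsto (fun k => ⟪p k, g₀⟫) atTop atTop :=
    tendsto_atTop_mono' atTop (hdom.mono fun k hk => (div_le_iff₀' hC).2 hk)
      (hp.atTop_div_const hC)
  obtain ⟨L, hL⟩ := hg.tendsto_residual
  refine ⟨Fin.cases hg₀V fun i => (hg.mem i).1, hg.orthonormal.fin_cons hg₀ hperp,
    ⟨L, hL.congr fun k => ?_⟩,
    Fin.cases hinner₀ fun i => by simpa only [Fin.cons_succ, hinner] using hg.tendsto_inner i,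
    fun i i' hii' => ?_⟩
  · simp only [Fin.sum_univ_succ, Fin.cons_zero, Fin.cons_succ, hinner]
    abel
  · obtain ⟨b, rfl⟩ := Fin.eq_succ_of_ne_zero (n := r) (i := i') fun h => by simp [h] at hii'
    cases i using Fin.cases with
    | zero =>
      refine ⟨C, hdom.mono fun k hk => ?_⟩
      simp only [Fin.cons_zero, Fin.cons_succ]
      calc ⟪p k, g b⟫ ≤ ‖p k‖ * ‖g b‖ := real_inner_le_norm _ _
        _ = ‖p k‖ := by rw [hg.orthonormal.1 b, mul_one]
        _ ≤ C * ⟪p k, g₀⟫ := hk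
    | succ a =>
      simpa only [Fin.cons_succ, hinner] using hg.inner_succ_le a b (by simpa using hii')

end IsDivergenceFrame

variable [FiniteDimensional ℝ E]

theorem exists_subseq_norm_le_two_mul_inner {V : Submodule ℝ E} {p : ℕ → E}
    (hpV : ∀ k, p k ∈ V) (hp : Tendsto (fun k => ‖p k‖) atTop atTop) :
    ∃ g ∈ V, ‖g‖ = 1 ∧ ∃ ψ : ℕ → ℕ, StrictMono ψ ∧
      ∀ᶠ k in atTop, ‖p (ψ k)‖ ≤ 2 * ⟪p (ψ k), g⟫ := by
  set u : ℕ → E := fun k => ‖p k‖⁻¹ • p k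
  have hpos : ∀ᶠ k in atTop, 0 < ‖p k‖ := hp.eventually_gt_atTop 0
  have hu : ∃ᶠ k in atTop, u k ∈ Metric.sphere 0 1 ∩ V :=
    (hpos.mono fun k hk => ⟨by simp [u, norm_smul, hk.ne'], V.smul_mem _ (hpV k)⟩).frequently
  obtain ⟨g, ⟨hg1, hgV⟩, ψ, hψ, hug⟩ :=
    ((isCompact_sphere 0 1).inter_right V.closed_of_finiteDimensional).tendsto_subseq' hu
  have hg : ‖g‖ = 1 := mem_sphere_zero_iff_norm.mp hg1
  refine ⟨g, hgV, hg, ψ, hψ, ?_⟩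
  have hinner : Tendsto (fun k => ⟪u (ψ k), g⟫) atTop (𝓝 1) := by
    simpa [real_inner_self_eq_norm_sq, hg] using hug.inner (𝕜 := ℝ) (tendsto_const_nhds (x := g))
  filter_upwards [hinner.eventually (eventually_ge_nhds one_half_lt_one),
    hψ.tendsto_atTop.eventually hpos] with k hk hk'
  rw [real_inner_smul_left, ← div_eq_inv_mul, le_div_iff₀ hk'] at hk
  linarith

theorem exists_isDivergenceFrame (V : Submodule ℝ E) (p : ℕ → E) (hpV : ∀ k, p k ∈ V) :
    ∃ φ : ℕ → ℕ, StrictMono φ ∧ ∃ (r : ℕ) (g : Fin r → E), IsDivergenceFrame V (p ∘ φ) g := by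
  induction hV : Module.finrank ℝ V using Nat.strong_induction_on generalizing V p with
  | _ d ih =>
  by_cases hp : Tendsto (fun k => ‖p k‖) atTop atTop
  · obtain ⟨g₀, hg₀V, hg₀, ψ, hψ, hdom⟩ := exists_subseq_norm_le_two_mul_inner hpV hp
    have hqV : ∀ k, p (ψ k) - ⟪p (ψ k), g₀⟫ • g₀ ∈ V ⊓ (ℝ ∙ g₀)ᗮ := fun k =>
      ⟨V.sub_mem (hpV _) (V.smul_mem _ hg₀V), by
        simpa [Submodule.starProjection_unit_singleton ℝ hg₀, real_inner_comm] using
          (ℝ ∙ g₀).sub_starProjection_mem_orthogonal (p (ψ k))⟩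
    have hrank := hV ▸ Submodule.finrank_inf_orthogonal_singleton_lt hg₀V (norm_ne_zero_iff.mp
      (hg₀ ▸ one_ne_zero))
    obtain ⟨φ, hφ, r, g, hg⟩ := ih _ hrank _ _ hqV rfl
    exact ⟨ψ ∘ φ, hψ.comp hφ, r + 1, Fin.cons g₀ g, hg.cons hg₀V hg₀ two_pos
      ((hp.comp hψ.tendsto_atTop).comp hφ.tendsto_atTop) (hφ.tendsto_atTop.eventually hdom)⟩
  · simp only [tendsto_atTop, not_forall, not_eventually, not_le] at hp
    obtain ⟨b, hb⟩ := hp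
    replace hb : ∃ᶠ k in atTop, p k ∈ Metric.closedBall 0 b :=
      hb.mono fun k hk => mem_closedBall_zero_iff.mpr hk.le
    obtain ⟨L, -, φ, hφ, hL⟩ := tendsto_subseq_of_frequently_bounded Metric.isBounded_closedBall hb
    exact ⟨φ, hφ, 0, Fin.elim0, .of_tendsto hL⟩

end DivergenceFrame

/-- Extraction of finitely many mutually orthogonal directions of divergence: if `Π_W x_k`
converges while `limsup ‖Π_{W^⊥} x_k‖ = ∞`, then along a subsequence there are `r ≥ 1`
mutually orthogonal unit vectors `g_1, …, g_r ∈ W^⊥` such that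
`x_k − ∑ i ⟨x_k, g_i⟩ g_i` converges, each `⟨x_k, g_i⟩ → +∞`, and the divergence rates are
non-increasing in `i`. -/
theorem divergence_directions_extraction {n : ℕ}
    (W : Submodule ℝ (EuclideanSpace ℝ (Fin n)))
    (x : ℕ → EuclideanSpace ℝ (Fin n))
    (hconv : ∃ L : EuclideanSpace ℝ (Fin n),
      Tendsto (fun k => (Submodule.orthogonalProjectionOnto W (x k) : EuclideanSpace ℝ (Fin n)))
        atTop (𝓝 L))
    (hlimsup : atTop.limsup
      (fun k => (‖(Submodule.orthogonalProjectionOnto Wᗮ (x k) : EuclideanSpace ℝ (Fin n))‖ : EReal))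
        = (⊤ : EReal)) :
    ∃ (φ : ℕ → ℕ), StrictMono φ ∧
      ∃ (r : ℕ), 1 ≤ r ∧
        ∃ g : Fin r → EuclideanSpace ℝ (Fin n),
          (∀ i, g i ∈ Wᗮ) ∧
          (∀ i, ‖g i‖ = 1) ∧
          (∀ i j, i ≠ j → ⟪g i, g j⟫ = 0) ∧
          (∃ L : EuclideanSpace ℝ (Fin n),
            Tendsto (fun j => x (φ j) - ∑ i : Fin r, ⟪x (φ j), g i⟫ • g i) atTop (𝓝 L)) ∧
          (∀ i, Tendsto (fun j => ⟪x (φ j), g i⟫) atTop atTop) ∧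
          (∀ i i' : Fin r, (i' : ℕ) = (i : ℕ) + 1 →
            ∃ C : ℝ, ∀ᶠ j in atTop, ⟪x (φ j), g i'⟫ ≤ C * ⟪x (φ j), g i⟫) := by
  obtain ⟨L, hL⟩ := hconv
  set a := fun k => (W.orthogonalProjectionOnto (x k) : EuclideanSpace ℝ (Fin n))
  set p := fun k => (Wᗮ.orthogonalProjectionOnto (x k) : EuclideanSpace ℝ (Fin n))
  obtain ⟨φ₀, hφ₀, hp⟩ := exists_strictMono_tendsto_atTop_of_limsup_eq_top hlimsup
  obtain ⟨φ₁, hφ₁, r, g, hg⟩ :=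
    exists_isDivergenceFrame Wᗮ (p ∘ φ₀) fun _ => (Wᗮ.orthogonalProjectionOnto _).2
  have hr := hg.pos (hp.comp hφ₁.tendsto_atTop)
  have hx : (fun k => x (φ₀ (φ₁ k))) = fun k => a (φ₀ (φ₁ k)) + p (φ₀ (φ₁ k)) := funext fun k =>
    (W.starProjection_add_starProjection_orthogonal _).symm
  have hxg : IsDivergenceFrame Wᗮ (fun k => x (φ₀ (φ₁ k))) g := hx ▸
    hg.add (hL.comp (hφ₀.comp hφ₁).tendsto_atTop) fun k i =>
      Submodule.inner_right_of_mem_orthogonal (W.orthogonalProjectionOnto _).2 (hg.mem i)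
  exact ⟨φ₀ ∘ φ₁, hφ₀.comp hφ₁, r, hr, g, hxg.mem, hxg.orthonormal.1,
    fun _ _ => (hxg.orthonormal.2 ·),
    hxg.tendsto_residual, hxg.tendsto_inner, hxg.inner_succ_le⟩
end

section
/- Let D ⊆ ℝⁿ be a Borel set and U := {u ∈ ℂⁿ : sup_{x∈D} Re⟨u,x⟩ < ∞}. Let (Ω, 𝓕, ℙ) be a probability space with a filtration (𝓕_t)_{t≥0}, X : ℝ≥0 × Ω → ℝⁿ a jointly measurable, (𝓕_t)-adapted process with values in D, and (p_t)_{t≥0} Borel kernels on ℝⁿ such that for x ∈ D each p_t(x,·) has total mass at most 1 and is concentrated on D, and such that X is Markov with transition function (p_t): for all s,t ≥ 0 and every bounded Borel f : ℝⁿ → ℂ, 𝔼[f(X_{s+t}) | 𝓕_s] = ∫ f(ξ) p_t(X_s, dξ) ℙ-a.s. Let Φ : ℝ≥0 × ℂⁿ → ℂ and ψ : ℝ≥0 × ℂⁿ → ℂⁿ satisfy ∫ e^{⟨u,ξ⟩} p_t(x,dξ) = Φ(t,u)·e^{⟨ψ(t,u),x⟩} for all t ≥ 0, x ∈ D, u ∈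 U. Let 0 ≤ t ≤ t₁ ≤ t₂ and u₁, u₂ ∈ U, and suppose Φ(t₂−t₁, u₂) ≠ 0. Then ψ(t₂−t₁,u₂) ∈ U and u₁ + ψ(t₂−t₁,u₂) ∈ U, and ℙ-almost surely 𝔼[e^{⟨u₁, X_{t₁}⟩ + ⟨u₂, X_{t₂}⟩} | 𝓕_t] = Φ(t₂−t₁, u₂) · Φ(t₁−t, u₁ + ψ(t₂−t₁,u₂)) · e^{⟨ψ(t₁−t, u₁ + ψ(t₂−t₁,u₂)), X_t⟩}. -/
open MeasureTheory Complex Filter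
open scoped NNReal

/-!
By the tower property, `𝔼[e^{⟨u₁,X_{t₁}⟩+⟨u₂,X_{t₂}⟩} | 𝓕_t]` is the `𝓕_t`-conditional expectation
of `e^{⟨u₁,X_{t₁}⟩} 𝔼[e^{⟨u₂,X_{t₂}⟩} | 𝓕_{t₁}]`. The Markov property and the affine form of the
transform turn the inner conditional expectation into `Φ(t₂−t₁,u₂) e^{⟨ψ(t₂−t₁,u₂),X_{t₁}⟩}`, so
the integrand becomes `Φ(t₂−t₁,u₂) e^{⟨u₁+ψ(t₂−t₁,u₂),X_{t₁}⟩}`, and a second application of the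
same one-step formula gives the result. The exponents stay in `U`: `|Φ(s,u)| e^{Re⟨ψ(s,u),x⟩}` is
the modulus of an integral of a function bounded on `D` against a sub-probability measure
concentrated on `D`, hence bounded in `x ∈ D`.
-/

section

variable {n : ℕ} {D : Set (Fin n → ℝ)}

lemma biPair_add (u v : Fin n → ℂ) (x : Fin n → ℝ) :
    biPair (u + v) x = biPair u x + biPair v x := by
  simp [biPair, add_mul, Finset.sum_add_distrib]

lemma continuous_exp_biPair (u : Fin n → ℂ) :
    Continuous fun x : Fin n → ℝ => exp (biPair u x) := by
  unfold biPair
  fun_prop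

lemma norm_exp_biPair_le {u : Fin n → ℂ} {x : Fin n → ℝ} {C : ℝ} (h : (biPair u x).re ≤ C) :
    ‖exp (biPair u x)‖ ≤ Real.exp C := by
  rw [norm_exp]
  exact Real.exp_le_exp.2 h

lemma add_mem_Uset {u v : Fin n → ℂ} (hu : u ∈ Uset D) (hv : v ∈ Uset D) : u + v ∈ Uset D := by
  obtain ⟨C, hC⟩ := hu
  obtain ⟨C', hC'⟩ := hv
  exact ⟨C + C', fun x hx => by rw [biPair_add, add_re]; exact add_le_add (hC x hx) (hC' x hx)⟩

lemma mem_Uset_of_mul_norm_exp_le {v : Fin n → ℂ} {c K : ℝ} (hc : 0 < c)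
    (h : ∀ x ∈ D, c * ‖exp (biPair v x)‖ ≤ K) : v ∈ Uset D := by
  refine ⟨Real.log (K / c), fun x hx => ?_⟩
  have hbound := h x hx
  rw [norm_exp] at hbound
  rw [Real.le_log_iff_exp_le (div_pos ((by positivity : 0 < c * _).trans_le hbound) hc),
    le_div_iff₀ hc, mul_comm]
  exact hbound

lemma norm_integral_exp_biPair_le {μ : Measure (Fin n → ℝ)} {u : Fin n → ℂ} {C : ℝ}
    (hμ : μ Set.univ ≤ 1) (hμD : ∀ᵐ ξ ∂μ, ξ ∈ D) (hC : ∀ x ∈ D, (biPair u x).re ≤ C) :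
    ‖∫ ξ, exp (biPair u ξ) ∂μ‖ ≤ Real.exp C := by
  have : IsFiniteMeasure μ := ⟨hμ.trans_lt ENNReal.one_lt_top⟩
  calc ‖∫ ξ, exp (biPair u ξ) ∂μ‖
      ≤ Real.exp C * μ.real Set.univ :=
        norm_integral_le_of_norm_le_const (hμD.mono fun ξ hξ => norm_exp_biPair_le (hC ξ hξ))
    _ ≤ Real.exp C :=
        mul_le_of_le_one_right (Real.exp_pos C).le (ENNReal.toReal_le_of_le_ofReal zero_le_one
          (by rwa [ENNReal.ofReal_one]))

lemma integrable_exp_biPair_comp {Ω : Type*} {mΩ : MeasurableSpace Ω} {μ : Measure Ω}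
    [IsFiniteMeasure μ] {Y : Ω → Fin n → ℝ} (hY : Measurable Y) (hYD : ∀ ω, Y ω ∈ D)
    {u : Fin n → ℂ} (hu : u ∈ Uset D) : Integrable (fun ω => exp (biPair u (Y ω))) μ := by
  obtain ⟨C, hC⟩ := hu
  exact .of_bound ((continuous_exp_biPair u).measurable.comp hY).aestronglyMeasurable _
    (ae_of_all _ fun ω => norm_exp_biPair_le (hC _ (hYD ω)))

structure IsAffineTransition (D : Set (Fin n → ℝ)) (p : ℝ≥0 → (Fin n → ℝ) → Measure (Fin n → ℝ))
    (Φ : ℝ≥0 → (Fin n → ℂ) → ℂ) (ψ : ℝ≥0 → (Fin n → ℂ) → (Fin n → ℂ)) : Prop where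
  measure_univ_le_one : ∀ (t : ℝ≥0), ∀ x ∈ D, p t x Set.univ ≤ 1
  measure_compl_eq_zero : ∀ (t : ℝ≥0), ∀ x ∈ D, p t x Dᶜ = 0
  integral_exp_biPair : ∀ (t : ℝ≥0), ∀ x ∈ D, ∀ u ∈ Uset D,
    ∫ ξ, exp (biPair u ξ) ∂(p t x) = Φ t u * exp (biPair (ψ t u) x)

def HasMarkovTransition {Ω : Type*} {mΩ : MeasurableSpace Ω} (P : Measure Ω)
    (𝓕 : Filtration ℝ≥0 mΩ) (X : ℝ≥0 → Ω → (Fin n → ℝ))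
    (p : ℝ≥0 → (Fin n → ℝ) → Measure (Fin n → ℝ)) : Prop :=
  ∀ (s t : ℝ≥0), ∀ f : (Fin n → ℝ) → ℂ, Measurable f → (∃ C : ℝ, ∀ y, ‖f y‖ ≤ C) →
    (P[fun ω => f (X (s + t) ω) | 𝓕 s]) =ᵐ[P] fun ω => ∫ ξ, f ξ ∂(p t (X s ω))

namespace IsAffineTransition

variable {p : ℝ≥0 → (Fin n → ℝ) → Measure (Fin n → ℝ)}
  {Φ : ℝ≥0 → (Fin n → ℂ) → ℂ} {ψ : ℝ≥0 → (Fin n → ℂ) → (Fin n → ℂ)}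

lemma ae_mem (hp : IsAffineTransition D p Φ ψ) (t : ℝ≥0) {x : Fin n → ℝ} (hx : x ∈ D) :
    ∀ᵐ ξ ∂(p t x), ξ ∈ D :=
  ae_iff.2 (hp.measure_compl_eq_zero t x hx)

lemma psi_mem_Uset (hp : IsAffineTransition D p Φ ψ) {s : ℝ≥0} {u : Fin n → ℂ}
    (hu : u ∈ Uset D) (hΦ : Φ s u ≠ 0) : ψ s u ∈ Uset D := by
  obtain ⟨C, hC⟩ := hu
  refine mem_Uset_of_mul_norm_exp_le (K := Real.exp C) (norm_pos_iff.2 hΦ) fun x hx => ?_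
  rw [← norm_mul, ← hp.integral_exp_biPair s x hx u ⟨C, hC⟩]
  exact norm_integral_exp_biPair_le (hp.measure_univ_le_one s x hx) (hp.ae_mem s hx) hC

variable {Ω : Type*} {mΩ : MeasurableSpace Ω} {P : Measure Ω} {𝓕 : Filtration ℝ≥0 mΩ}
  {X : ℝ≥0 → Ω → (Fin n → ℝ)}

lemma condExp_exp_biPair (hp : IsAffineTransition D p Φ ψ) (hX : HasMarkovTransition P 𝓕 X p)
    (hXD : ∀ t ω, X t ω ∈ D) {a b : ℝ≥0} (hab : a ≤ b) {u : Fin n → ℂ} (hu : u ∈ Uset D) :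
    (P[fun ω => exp (biPair u (X b ω)) | 𝓕 a]) =ᵐ[P]
      fun ω => Φ (b - a) u * exp (biPair (ψ (b - a) u) (X a ω)) := by
  obtain ⟨C, hC⟩ := hu
  -- `e^{⟨u,·⟩}` need not be bounded off `D`; cutting it off outside a closed half-space makes it
  -- a bounded Borel function without changing it on `D`.
  set f : (Fin n → ℝ) → ℂ := fun ξ => if (biPair u ξ).re ≤ C then exp (biPair u ξ) else 0
  have hf_meas : Measurable f :=
    Measurable.ite (measurableSet_le (by unfold biPair; fun_prop) measurable_const)
      (continuous_exp_biPair u).measurable measurable_const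
  have hf_bdd : ∀ ξ, ‖f ξ‖ ≤ Real.exp C := fun ξ => by
    dsimp only [f]
    split_ifs with hξ
    · exact norm_exp_biPair_le hξ
    · simpa using (Real.exp_pos C).le
  have hf_eq : ∀ ξ ∈ D, f ξ = exp (biPair u ξ) := fun ξ hξ => if_pos (hC ξ hξ)
  have hM := hX a (b - a) f hf_meas ⟨_, hf_bdd⟩
  rw [add_tsub_cancel_of_le hab] at hM
  simp only [hf_eq _ (hXD b _)] at hM
  refine hM.trans (ae_of_all _ fun ω => ?_)
  dsimp only
  rw [integral_congr_ae ((hp.ae_mem (b - a) (hXD a ω)).mono hf_eq),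
    hp.integral_exp_biPair _ _ (hXD a ω) u ⟨C, hC⟩]

lemma condExp_exp_biPair_add_biPair [IsFiniteMeasure P] (hp : IsAffineTransition D p Φ ψ)
    (hX : HasMarkovTransition P 𝓕 X p) (hXa : Adapted 𝓕 X) (hXD : ∀ t ω, X t ω ∈ D)
    {a b : ℝ≥0} (hab : a ≤ b) {u₁ u₂ : Fin n → ℂ} (hu₁ : u₁ ∈ Uset D) (hu₂ : u₂ ∈ Uset D) :
    (P[fun ω => exp (biPair u₁ (X a ω) + biPair u₂ (X b ω)) | 𝓕 a]) =ᵐ[P]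
      fun ω => Φ (b - a) u₂ * exp (biPair (u₁ + ψ (b - a) u₂) (X a ω)) := by
  obtain ⟨C₁, hC₁⟩ := hu₁
  have h_pull := condExp_stronglyMeasurable_bilin_of_bound (ContinuousLinearMap.mul ℝ ℂ)
    (𝓕.le a) ((continuous_exp_biPair u₁).comp_stronglyMeasurable (hXa a).stronglyMeasurable)
    (integrable_exp_biPair_comp (μ := P) ((hXa b).mono (𝓕.le b) le_rfl) (hXD b) hu₂) (Real.exp C₁)
    (ae_of_all _ fun ω => norm_exp_biPair_le (hC₁ _ (hXD a ω)))
  simp only [ContinuousLinearMap.mul_apply', ← exp_add] at h_pull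
  filter_upwards [h_pull, hp.condExp_exp_biPair hX hXD hab hu₂] with ω h_pullω h_stepω
  rw [h_pullω, h_stepω, biPair_add, exp_add]
  ring

end IsAffineTransition

end

theorem affine_two_time_condexp_general {n : ℕ} {Ω : Type*} {mΩ : MeasurableSpace Ω}
    (P : Measure Ω) [IsProbabilityMeasure P]
    (𝓕 : Filtration ℝ≥0 mΩ)
    (D : Set (Fin n → ℝ))
    (X : ℝ≥0 → Ω → (Fin n → ℝ))
    (hXadapted : Adapted 𝓕 X)
    (hXD : ∀ t ω, X t ω ∈ D)
    (p : ℝ≥0 → (Fin n → ℝ) → Measure (Fin n → ℝ))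
    (hp1 : ∀ (t : ℝ≥0), ∀ x ∈ D, p t x Set.univ ≤ 1)
    (hpD : ∀ (t : ℝ≥0), ∀ x ∈ D, p t x Dᶜ = 0)
    (hMarkov : ∀ (s t : ℝ≥0), ∀ f : (Fin n → ℝ) → ℂ, Measurable f →
      (∃ C : ℝ, ∀ y, ‖f y‖ ≤ C) →
      (P[fun ω => f (X (s + t) ω) | 𝓕 s]) =ᵐ[P] fun ω => ∫ ξ, f ξ ∂(p t (X s ω)))
    (Φ : ℝ≥0 → (Fin n → ℂ) → ℂ) (ψ : ℝ≥0 → (Fin n → ℂ) → (Fin n → ℂ))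
    (haff : ∀ (t : ℝ≥0), ∀ x ∈ D, ∀ u ∈ Uset D,
      ∫ ξ, Complex.exp (biPair u ξ) ∂(p t x) = Φ t u * Complex.exp (biPair (ψ t u) x))
    (t t₁ t₂ : ℝ≥0) (ht₁ : t ≤ t₁) (ht₂ : t₁ ≤ t₂)
    (u₁ : Fin n → ℂ) (hu₁ : u₁ ∈ Uset D)
    (u₂ : Fin n → ℂ) (hu₂ : u₂ ∈ Uset D)
    (hΦ : Φ (t₂ - t₁) u₂ ≠ 0) :
    ψ (t₂ - t₁) u₂ ∈ Uset D ∧ u₁ + ψ (t₂ - t₁) u₂ ∈ Uset D ∧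
      (P[fun ω => Complex.exp (biPair u₁ (X t₁ ω) + biPair u₂ (X t₂ ω)) | 𝓕 t]) =ᵐ[P]
        fun ω => Φ (t₂ - t₁) u₂ * Φ (t₁ - t) (u₁ + ψ (t₂ - t₁) u₂) *
          Complex.exp (biPair (ψ (t₁ - t) (u₁ + ψ (t₂ - t₁) u₂)) (X t ω)) := by
  have hp : IsAffineTransition D p Φ ψ := ⟨hp1, hpD, haff⟩
  have hv := hp.psi_mem_Uset hu₂ hΦ
  have hw := add_mem_Uset hu₁ hv
  refine ⟨hv, hw, ?_⟩
  calc P[fun ω => exp (biPair u₁ (X t₁ ω) + biPair u₂ (X t₂ ω)) | 𝓕 t]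
      =ᵐ[P] P[P[fun ω => exp (biPair u₁ (X t₁ ω) + biPair u₂ (X t₂ ω)) | 𝓕 t₁] | 𝓕 t] :=
        (condExp_condExp_of_le (𝓕.mono ht₁) (𝓕.le t₁)).symm
    _ =ᵐ[P] P[Φ (t₂ - t₁) u₂ • fun ω => exp (biPair (u₁ + ψ (t₂ - t₁) u₂) (X t₁ ω)) | 𝓕 t] :=
        condExp_congr_ae (hp.condExp_exp_biPair_add_biPair hMarkov hXadapted hXD ht₂ hu₁ hu₂)
    _ =ᵐ[P] Φ (t₂ - t₁) u₂ • P[fun ω => exp (biPair (u₁ + ψ (t₂ - t₁) u₂) (X t₁ ω)) | 𝓕 t] :=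
        condExp_smul _ _ _
    _ =ᵐ[P] _ := by
        filter_upwards [hp.condExp_exp_biPair hMarkov hXD ht₁ hw] with ω hω
        rw [Pi.smul_apply, hω, smul_eq_mul, mul_assoc]

/-- Two-time conditional Fourier–Laplace transform of an affine Markov process: for
`t ≤ t₁ ≤ t₂`, `u₁, u₂ ∈ U` with `Φ(t₂−t₁,u₂) ≠ 0`, one has `ψ(t₂−t₁,u₂) ∈ U`,
`u₁ + ψ(t₂−t₁,u₂) ∈ U`, and
`𝔼[e^{⟨u₁,X_{t₁}⟩+⟨u₂,X_{t₂}⟩}|𝓕_t]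
  = Φ(t₂−t₁,u₂) Φ(t₁−t, u₁+ψ(t₂−t₁,u₂)) e^{⟨ψ(t₁−t,u₁+ψ(t₂−t₁,u₂)),X_t⟩}` a.s. -/
theorem affine_two_time_condexp {n : ℕ} {Ω : Type*} {mΩ : MeasurableSpace Ω}
    (P : Measure Ω) [IsProbabilityMeasure P]
    (𝓕 : Filtration ℝ≥0 mΩ)
    (D : Set (Fin n → ℝ)) (hD : MeasurableSet D)
    (X : ℝ≥0 → Ω → (Fin n → ℝ))
    (hXmeas : Measurable fun q : ℝ≥0 × Ω => X q.1 q.2)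
    (hXadapted : Adapted 𝓕 X)
    (hXD : ∀ t ω, X t ω ∈ D)
    (p : ℝ≥0 → (Fin n → ℝ) → Measure (Fin n → ℝ))
    (hp1 : ∀ (t : ℝ≥0), ∀ x ∈ D, p t x Set.univ ≤ 1)
    (hpD : ∀ (t : ℝ≥0), ∀ x ∈ D, p t x Dᶜ = 0)
    (hMarkov : ∀ (s t : ℝ≥0), ∀ f : (Fin n → ℝ) → ℂ, Measurable f →
      (∃ C : ℝ, ∀ y, ‖f y‖ ≤ C) →
      (P[fun ω => f (X (s + t) ω) | 𝓕 s]) =ᵐ[P] fun ω => ∫ ξ, f ξ ∂(p t (X s ω)))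
    (Φ : ℝ≥0 → (Fin n → ℂ) → ℂ) (ψ : ℝ≥0 → (Fin n → ℂ) → (Fin n → ℂ))
    (haff : ∀ (t : ℝ≥0), ∀ x ∈ D, ∀ u ∈ Uset D,
      ∫ ξ, Complex.exp (biPair u ξ) ∂(p t x) = Φ t u * Complex.exp (biPair (ψ t u) x))
    (t t₁ t₂ : ℝ≥0) (ht₁ : t ≤ t₁) (ht₂ : t₁ ≤ t₂)
    (u₁ : Fin n → ℂ) (hu₁ : u₁ ∈ Uset D)
    (u₂ : Fin n → ℂ) (hu₂ : u₂ ∈ Uset D)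
    (hΦ : Φ (t₂ - t₁) u₂ ≠ 0) :
    ψ (t₂ - t₁) u₂ ∈ Uset D ∧ u₁ + ψ (t₂ - t₁) u₂ ∈ Uset D ∧
      (P[fun ω => Complex.exp (biPair u₁ (X t₁ ω) + biPair u₂ (X t₂ ω)) | 𝓕 t]) =ᵐ[P]
        fun ω => Φ (t₂ - t₁) u₂ * Φ (t₁ - t) (u₁ + ψ (t₂ - t₁) u₂) *
          Complex.exp (biPair (ψ (t₁ - t) (u₁ + ψ (t₂ - t₁) u₂)) (X t ω)) :=
  affine_two_time_condexp_general P 𝓕 D X hXadapted hXD p hp1 hpD hMarkov Φ ψ haff t t₁ t₂ ht₁ ht₂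
    u₁ hu₁ u₂ hu₂ hΦ
end
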